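/- arXiv:math/0601283 — 4 statements merged into one kernel-verified Lean document; each statement's English description precedes it below -/
import Mathlib

section
/- Let G be a torsion-free group, n ≥ 1, and s, a, b ∈ G elements such that s commutes with a and with b, s^(2*(n-1)) = a * b⁻¹ * a⁻¹ * b, and s² = b * a⁻¹ * b⁻¹ * a. Then s = 1 and a * b = b * a. -/
theorem stmt_2 {G : Type*} [Group G] (hG : ∀ g : G, g ≠ 1 → ¬IsOfFinOrder g)
    (n : ℕ) (hn : 1 ≤ n) (s a b : G)
    (hsa : s * a = a * s) (hsb : s * b = b * s)
    (h1 : s ^ (2 * (n - 1)) = a * b⁻¹ * a⁻¹ * b)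
    (h2 : s ^ 2 = b * a⁻¹ * b⁻¹ * a) :
    s = 1 ∧ a * b = b * a := by
  have hca : Commute (s ^ 2) a := (Commute.pow_left hsa 2)
  have hcb : Commute (s ^ 2) b := (Commute.pow_left hsb 2)
  -- conjugate h2 by a : s^2 = a b a⁻¹ b⁻¹
  have e1 : s ^ 2 = a * b * a⁻¹ * b⁻¹ := by
    have h := hca.eq
    rw [h2] at h
    rw [h2]
    calc b * a⁻¹ * b⁻¹ * a = (b * a⁻¹ * b⁻¹ * a * a) * a⁻¹ := by group
    _ = (a * (b * a⁻¹ * b⁻¹ * a)) * a⁻¹ := by rw [h]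
    _ = a * b * a⁻¹ * b⁻¹ := by group
  have h1' : (s ^ 2) ^ (n - 1) = a * b⁻¹ * a⁻¹ * b := by
    rw [← pow_mul]; exact h1
  -- conjugate by b : (s^2)^(n-1) = b a b⁻¹ a⁻¹ = (s^2)⁻¹
  have e2 : (s ^ 2) ^ (n - 1) = (s ^ 2)⁻¹ := by
    have h := (hcb.pow_left (n - 1)).eq
    rw [h1'] at h
    rw [h1', e1]
    calc a * b⁻¹ * a⁻¹ * b = (a * b⁻¹ * a⁻¹ * b * b) * b⁻¹ := by group
    _ = (b * (a * b⁻¹ * a⁻¹ * b)) * b⁻¹ := by rw [h]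
    _ = (a * b * a⁻¹ * b⁻¹)⁻¹ := by group
  have key : (s ^ 2) ^ n = 1 := by
    have hn' : n - 1 + 1 = n := Nat.succ_pred_eq_of_pos hn
    calc (s ^ 2) ^ n = (s ^ 2) ^ (n - 1) * s ^ 2 := by rw [← pow_succ, hn']
    _ = (s ^ 2)⁻¹ * s ^ 2 := by rw [e2]
    _ = 1 := inv_mul_cancel _
  have hs1 : s = 1 := by
    by_contra hs
    exact hG s hs (isOfFinOrder_iff_pow_eq_one.mpr
      ⟨2 * n, by positivity, by rw [pow_mul]; exact key⟩)
  refine ⟨hs1, ?_⟩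
  rw [hs1, one_pow] at h2
  have h3 : b * a⁻¹ * b⁻¹ * a = 1 := h2.symm
  have h4 : b * a⁻¹ = a⁻¹ * b := by
    calc b * a⁻¹ = (b * a⁻¹ * b⁻¹ * a) * a⁻¹ * b := by group
    _ = 1 * a⁻¹ * b := by rw [h3]
    _ = a⁻¹ * b := by group
  calc a * b = a * (b * a⁻¹) * a := by group
  _ = a * (a⁻¹ * b) * a := by rw [h4]
  _ = b * a := by group
end

section
/- Let P be a group such that every nontrivial subgroup of P admits a nontrivial group homomorphism to ℤ. Let G be a group whose abelianization G/[G,G] is finite. Then every group homomorphism φ : G → P is trivial. -/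
theorem MonoidHom.eq_one_of_finite_abelianization {G M : Type*} [Group G] [CommGroup M]
    [IsMulTorsionFree M] [Finite (Abelianization G)] (f : G →* M) : f = 1 := by
  ext g
  have hfin : IsOfFinOrder (Abelianization.lift f (Abelianization.of g)) :=
    (Abelianization.lift f).isOfFinOrder (isOfFinOrder_of_finite _)
  simpa using hfin.eq_one'

theorem stmt_4 {P G : Type*} [Group P] [Group G]
    (hP : ∀ H : Subgroup P, H ≠ ⊥ → ∃ f : H →* Multiplicative ℤ, f ≠ 1)
    (hG : Finite (Abelianization G))
    (φ : G →* P) : ∀ g : G, φ g = 1 := by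
  have hrange : φ.range = ⊥ := by
    by_contra hne
    obtain ⟨f, hf⟩ := hP φ.range hne
    have hcomp :
        f.comp φ.rangeRestrict = (1 : φ.range →* Multiplicative ℤ).comp φ.rangeRestrict :=
      (f.comp φ.rangeRestrict).eq_one_of_finite_abelianization
    exact hf ((MonoidHom.cancel_right φ.rangeRestrict_surjective).mp hcomp)
  exact DFunLike.congr_fun (MonoidHom.range_eq_bot_iff.mp hrange)
end

section
/- Let n > 2, let X be a nonempty set equipped with an action of the symmetric group S(n) = Equiv.Perm (Fin n), let A be an abelian group, and let f : X → (Fin n → A) be a map such that for every x ∈ X the values f(x)(1), ..., f(x)(n) are pairwise distinct. Suppose there is a group automorphism α of S(n) such that f(σ • x)(i) = f(x)(α(σ)⁻¹ i) for all σ ∈ S(n), x ∈ X, i ∈ Fin n (strict equivariance). Then for all distinct indices i ≠ j in Fin n there is no c ∈ A with f(x)(i) − f(x)(j) = c for all x ∈ X. -/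
theorem stmt_16 {X : Type*} [Nonempty X] {A : Type*} [AddCommGroup A]
    (n : ℕ) (hn : 2 < n)
    [MulAction (Equiv.Perm (Fin n)) X]
    (f : X → Fin n → A)
    (hdist : ∀ x : X, Function.Injective (f x))
    (α : Equiv.Perm (Fin n) ≃* Equiv.Perm (Fin n))
    (hequiv : ∀ (σ : Equiv.Perm (Fin n)) (x : X) (i : Fin n),
      f (σ • x) i = f x ((α σ)⁻¹ i)) :
    ∀ i j : Fin n, i ≠ j → ¬ ∃ c : A, ∀ x : X, f x i - f x j = c := by
  intro i j hij ⟨c, hc⟩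
  -- find k distinct from i and j
  obtain ⟨k, hk⟩ : ∃ k : Fin n, k ∉ ({i, j} : Finset (Fin n)) := by
    have hcard : ({i, j} : Finset (Fin n)).card < Fintype.card (Fin n) := by
      have h2' : ({i, j} : Finset (Fin n)).card ≤ 2 :=
        (Finset.card_insert_le _ _).trans (by simp)
      have : (2 : ℕ) < Fintype.card (Fin n) := by simpa using hn
      omega
    by_contra h
    push_neg at h
    have : (Finset.univ : Finset (Fin n)) ⊆ {i, j} := fun k _ => h k
    exact absurd (Finset.card_le_card this) (by simpa using hcard)
  simp only [Finset.mem_insert, Finset.mem_singleton, not_or] at hk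
  obtain ⟨hki, hkj⟩ := hk
  set τ : Equiv.Perm (Fin n) := Equiv.swap j k
  set σ : Equiv.Perm (Fin n) := α.symm τ⁻¹
  have hασ : (α σ)⁻¹ = τ := by simp [σ]
  obtain ⟨x⟩ : Nonempty X := inferInstance
  have h1 : f (σ • x) i - f (σ • x) j = c := hc _
  rw [hequiv, hequiv, hασ] at h1
  have hτi : τ i = i :=
    Equiv.swap_apply_of_ne_of_ne (fun h => hij h) (fun h => hki h.symm)
  have hτj : τ j = k := Equiv.swap_apply_left j k
  rw [hτi, hτj] at h1
  have h2 := hc x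
  have : f x j = f x k := by
    have h3 := h1.trans h2.symm
    have := sub_right_injective h3.symm
    exact this
  exact hkj (hdist x this).symm
end

section
/- Fix n ≥ 5. Let G be the group presented by generators σ₁, ..., σ_{n−1}, a₁, a₂ subject to the Zariski relations: (1) σᵢσⱼ = σⱼσᵢ for |i−j| ≥ 2; (2) σᵢσ_{i+1}σᵢ = σ_{i+1}σᵢσ_{i+1}; (3) σᵢa_k = a_kσᵢ for k = 1,2 and i ≥ 2; (4) (σ₁⁻¹a_k)² = (a_kσ₁⁻¹)² for k = 1,2; (5) σ₁⋯σ_{n−2}σ_{n−1}²σ_{n−2}⋯σ₁ = a₁a₂⁻¹a₁⁻¹a₂; (6) a₂σ₁⁻¹a₁⁻¹σ₁a₂⁻¹σ₁⁻¹a₁σ₁ = σ₁². Then the abelianization G/[G,G] is isomorphic to ℤ × ℤ × (ℤ/2ℤ). -/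
/-- Generators of the Zariski presentation: `Sum.inl i` is σ_{i+1}
(for `i : Fin (n-1)`, so σ₁,…,σ_{n−1}), `Sum.inr k` is a_{k+1} (a₁, a₂). -/
abbrev ZariskiGen (n : ℕ) := Fin (n - 1) ⊕ Fin 2

/-- σ generators in the free group. -/
def zσ (n : ℕ) (i : Fin (n - 1)) : FreeGroup (ZariskiGen n) := FreeGroup.of (Sum.inl i)

/-- a generators in the free group. -/
def za (n : ℕ) (k : Fin 2) : FreeGroup (ZariskiGen n) := FreeGroup.of (Sum.inr k)

/-- The product σ₁ ⋯ σ_{n−1} of all σ generators in order. -/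
def zariskiFullProd (n : ℕ) : FreeGroup (ZariskiGen n) :=
  (List.ofFn (zσ n)).prod

/-- The Zariski relations of the torus braid group `B_n(T²)`, written as
words `lhs * rhs⁻¹` in the free group on the generators. Note that
σ₁ ⋯ σ_{n−2} σ_{n−1}² σ_{n−2} ⋯ σ₁ = (σ₁ ⋯ σ_{n−1}) · (σ_{n−1} ⋯ σ₁). -/
def zariskiRels (n : ℕ) : Set (FreeGroup (ZariskiGen n)) :=
  -- (1) σᵢ σⱼ = σⱼ σᵢ for |i − j| ≥ 2
  {r | ∃ i j : Fin (n - 1), (i : ℕ) + 2 ≤ (j : ℕ) ∧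
        r = zσ n i * zσ n j * (zσ n j * zσ n i)⁻¹} ∪
  -- (2) σᵢ σ_{i+1} σᵢ = σ_{i+1} σᵢ σ_{i+1}
  {r | ∃ i j : Fin (n - 1), (j : ℕ) = (i : ℕ) + 1 ∧
        r = zσ n i * zσ n j * zσ n i * (zσ n j * zσ n i * zσ n j)⁻¹} ∪
  -- (3) σᵢ a_k = a_k σᵢ for i ≥ 2 (0-indexed: i ≥ 1)
  {r | ∃ i : Fin (n - 1), 1 ≤ (i : ℕ) ∧ ∃ k : Fin 2,
        r = zσ n i * za n k * (za n k * zσ n i)⁻¹} ∪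
  -- (4) (σ₁⁻¹ a_k)² = (a_k σ₁⁻¹)²
  {r | ∃ i : Fin (n - 1), (i : ℕ) = 0 ∧ ∃ k : Fin 2,
        r = ((zσ n i)⁻¹ * za n k) ^ 2 * (((za n k) * (zσ n i)⁻¹) ^ 2)⁻¹} ∪
  -- (5) σ₁ ⋯ σ_{n−2} σ_{n−1}² σ_{n−2} ⋯ σ₁ = a₁ a₂⁻¹ a₁⁻¹ a₂
  {r | r = zariskiFullProd n * (List.ofFn (zσ n)).reverse.prod *
        (za n 0 * (za n 1)⁻¹ * (za n 0)⁻¹ * za n 1)⁻¹} ∪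
  -- (6) a₂ σ₁⁻¹ a₁⁻¹ σ₁ a₂⁻¹ σ₁⁻¹ a₁ σ₁ = σ₁²
  {r | ∃ i : Fin (n - 1), (i : ℕ) = 0 ∧
        r = za n 1 * (zσ n i)⁻¹ * (za n 0)⁻¹ * zσ n i * (za n 1)⁻¹ *
              (zσ n i)⁻¹ * za n 0 * zσ n i * ((zσ n i) ^ 2)⁻¹}

/-!
In an abelian quotient of `G` the braid relations (2) collapse all the `σᵢ` to a single element
`s`, and relation (6) becomes `s² = 1`; once the group is commutative, `s² = 1` is also all that
survives of relations (1)–(6). Hence the abelianization is the free abelian group on `a₁, a₂, s`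
modulo `s² = 1`. Concretely, `σᵢ ↦ (0, 0, 1)`, `a₁ ↦ (1, 0, 0)`, `a₂ ↦ (0, 1, 0)` defines a
homomorphism to `ℤ × ℤ × ZMod 2`, and `(x, y, z) ↦ a₁ˣ a₂ʸ σ₁^z` is its inverse.
-/

lemma ZMod.lift_apply_eq_val_nsmul {A : Type*} [AddCommGroup A] {m : ℕ} [NeZero m]
    (f : {f : ℤ →+ A // f m = 0}) (z : ZMod m) : ZMod.lift m f z = z.val • f.1 1 :=
  calc ZMod.lift m f z = ZMod.lift m f ((z.val : ℤ) : ZMod m) := by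
        rw [Int.cast_natCast, ZMod.natCast_zmod_val]
    _ = z.val • f.1 1 := by rw [ZMod.lift_coe, ← map_nsmul, nsmul_one]

lemma eq_of_mul_mul_eq_mul_mul {M : Type*} [CommGroup M] {x y : M} (h : x * y * x = y * x * y) :
    x = y := by
  rw [mul_comm y x] at h
  exact mul_left_cancel h

namespace ZariskiAbelianization

open Multiplicative (ofAdd)

variable {n : ℕ}

lemma lift_eq_one_of_mem_zariskiRels {M : Type*} [CommGroup M] {f : ZariskiGen n → M} {s : M}
    (hσ : ∀ i, f (.inl i) = s) (hs : s ^ 2 = 1) {r : FreeGroup (ZariskiGen n)}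
    (hr : r ∈ zariskiRels n) : FreeGroup.lift f r = 1 := by
  have hprod : FreeGroup.lift f (List.ofFn (zσ n)).prod = s ^ (n - 1) := by
    simp [map_list_prod, List.map_ofFn, Function.comp_def, zσ, hσ]
  have hprod_rev : FreeGroup.lift f (List.ofFn (zσ n)).reverse.prod = s ^ (n - 1) := by
    rw [map_list_prod, List.map_reverse, List.prod_reverse, ← map_list_prod, hprod]
  have hprod_sq : s ^ (n - 1) * s ^ (n - 1) = 1 := by
    rw [← pow_add, ← two_mul, pow_mul, hs, one_pow]
  rcases hr with ((((⟨i, j, -, rfl⟩ | ⟨i, j, -, rfl⟩) | ⟨i, -, k, rfl⟩) | ⟨i, -, k, rfl⟩) | rfl) |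
    ⟨i, -, rfl⟩
  all_goals
    simp only [zariskiFullProd, zσ, za, map_mul, map_inv, map_pow, FreeGroup.lift_apply_of, hσ,
      hprod, hprod_rev, hs, hprod_sq, inv_one, one_mul, mul_one]
    apply Additive.ofMul.injective
    simp only [ofMul_mul, ofMul_inv, ofMul_pow, ofMul_one]
    abel

variable (n) in
def toAb : FreeGroup (ZariskiGen n) →* Abelianization (PresentedGroup (zariskiRels n)) :=
  Abelianization.of.comp (PresentedGroup.mk _)

@[simp]
lemma toAb_of (g : ZariskiGen n) :
    toAb n (FreeGroup.of g) = Abelianization.of (PresentedGroup.of g) :=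
  rfl

lemma toAb_eq_of_mul_inv_mem {x y : FreeGroup (ZariskiGen n)} (h : x * y⁻¹ ∈ zariskiRels n) :
    toAb n x = toAb n y :=
  congrArg Abelianization.of (PresentedGroup.mk_eq_mk_of_mul_inv_mem h)

lemma toAb_zσ_eq_of_val_eq_succ {i j : Fin (n - 1)} (hij : (j : ℕ) = i + 1) :
    toAb n (zσ n i) = toAb n (zσ n j) := by
  have h := toAb_eq_of_mul_inv_mem (x := zσ n i * zσ n j * zσ n i) (y := zσ n j * zσ n i * zσ n j)
    (Or.inl <| Or.inl <| Or.inl <| Or.inl <| Or.inr ⟨i, j, hij, rfl⟩)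
  simp only [map_mul] at h
  exact eq_of_mul_mul_eq_mul_mul h

lemma toAb_zσ_eq (i j : Fin (n - 1)) : toAb n (zσ n i) = toAb n (zσ n j) := by
  suffices h : ∀ (m : ℕ) (hm : m < n - 1), toAb n (zσ n ⟨m, hm⟩) = toAb n (zσ n ⟨0, by omega⟩) from
    (h i i.2).trans (h j j.2).symm
  intro m hm
  induction m with
  | zero => rfl
  | succ m ih => exact (toAb_zσ_eq_of_val_eq_succ (i := ⟨m, by omega⟩) rfl).symm.trans (ih _)

lemma toAb_zσ_sq (i : Fin (n - 1)) : toAb n (zσ n i) ^ 2 = 1 := by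
  let σ₁ : Fin (n - 1) := ⟨0, i.pos⟩
  have h := toAb_eq_of_mul_inv_mem (Or.inr ⟨σ₁, rfl, rfl⟩ : _ ∈ zariskiRels n)
  simp only [map_mul, map_inv, map_pow] at h
  rw [toAb_zσ_eq i σ₁, ← h]
  apply Additive.ofMul.injective
  simp only [ofMul_mul, ofMul_inv, ofMul_one]
  abel

def genImage : ZariskiGen n → Multiplicative (ℤ × ℤ × ZMod 2)
  | .inl _ => ofAdd (0, 0, 1)
  | .inr k => ![ofAdd (1, 0, 0), ofAdd (0, 1, 0)] k

variable (n) in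
def toProd : Abelianization (PresentedGroup (zariskiRels n)) →* Multiplicative (ℤ × ℤ × ZMod 2) :=
  Abelianization.lift <| PresentedGroup.toGroup fun _ ↦
    lift_eq_one_of_mem_zariskiRels (f := genImage) (fun _ ↦ rfl) (by decide)

@[simp]
lemma toProd_of (g : ZariskiGen n) :
    toProd n (Abelianization.of (PresentedGroup.of g)) = genImage g := by
  simp [toProd]

def ofProd (i : Fin (n - 1)) :
    Multiplicative (ℤ × ℤ × ZMod 2) →* Abelianization (PresentedGroup (zariskiRels n)) :=
  AddMonoidHom.toMultiplicativeLeft <|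
    (zmultiplesHom _ (Additive.ofMul (toAb n (za n 0)))).coprod <|
      (zmultiplesHom _ (Additive.ofMul (toAb n (za n 1)))).coprod <|
        ZMod.lift 2 ⟨zmultiplesHom _ (Additive.ofMul (toAb n (zσ n i))), by
          simp [← ofMul_zpow, toAb_zσ_sq]⟩

lemma ofProd_ofAdd (i : Fin (n - 1)) (x y : ℤ) (z : ZMod 2) :
    ofProd i (ofAdd (x, y, z)) =
      toAb n (za n 0) ^ x * toAb n (za n 1) ^ y * toAb n (zσ n i) ^ z.val := by
  simp [ofProd, ZMod.lift_apply_eq_val_nsmul, mul_assoc]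

lemma ofProd_comp_toProd (i : Fin (n - 1)) : (ofProd i).comp (toProd n) = .id _ := by
  refine Abelianization.hom_ext _ _ (PresentedGroup.ext fun g ↦ ?_)
  rcases g with j | k
  · simpa [ofProd_ofAdd, genImage, ZMod.val_one, zσ] using toAb_zσ_eq i j
  · fin_cases k <;> simp [ofProd_ofAdd, genImage, za]

lemma toProd_comp_ofProd (i : Fin (n - 1)) : (toProd n).comp (ofProd i) = .id _ := by
  refine MonoidHom.ext fun ⟨x, y, z⟩ ↦ ?_
  change toProd n (ofProd i (ofAdd (x, y, z))) = ofAdd (x, y, z)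
  simp [ofProd_ofAdd, genImage, za, zσ, ← ofAdd_zsmul, ← ofAdd_nsmul, ← ofAdd_add]

end ZariskiAbelianization

theorem stmt_17 (n : ℕ) (hn : 5 ≤ n) :
    Nonempty (Abelianization (PresentedGroup (zariskiRels n)) ≃*
      Multiplicative (ℤ × ℤ × ZMod 2)) :=
  let σ₁ : Fin (n - 1) := ⟨0, by omega⟩
  ⟨(ZariskiAbelianization.toProd n).toMulEquiv (ZariskiAbelianization.ofProd σ₁)
    (ZariskiAbelianization.ofProd_comp_toProd σ₁) (ZariskiAbelianization.toProd_comp_ofProd σ₁)⟩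
end
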